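/- Let λ be a partition of n. The map τ: S(λ) → S(λ'), v_t ↦ v_{t'}, is an isomorphism of A_n(q)-modules, where S(λ) and S(λ') are restricted to the alternating Hecke algebra A_n(q) ⊆ H_n. -/

import Mathlib

/-
Conjugating a tableau exchanges rows and columns, so it negates every axial distance:
`ρ_{t'}(i) = -ρ_t(i)`. Together with `α_{-k} = -α_k` and `[k]⁻¹ + [-k]⁻¹ = -(q - q⁻¹)` this shows
that τ turns the action of `T_i` on `S(λ)` into the action of `(q - q⁻¹) - T_i = T_i^#` on `S(λ')`.
The relation `τ(v a) = τ(v) a^#` is preserved by sums and products, and the `T_i` generate `H_n`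
(a reduced word `w = s_{i₁} ⋯ s_{i_k}` gives `T_w = T_{i₁} ⋯ T_{i_k}`), so it holds for all
`a ∈ H_n`; for `a ∈ A_n(q)` it says that τ is `A_n(q)`-linear.
-/

open scoped Classical

noncomputable section

/-- The simple transposition swapping `i` and `i+1` (0-indexed; this is the Coxeter
generator `s_{i+1}` in 1-indexed notation) in the symmetric group on `Fin n`. -/
def sTr (n i : ℕ) : Equiv.Perm (Fin n) :=
  if h : i + 1 < n then Equiv.swap ⟨i, Nat.lt_of_succ_lt h⟩ ⟨i + 1, h⟩ else 1

/-- The Coxeter length: the minimal length of an expression of `w` as a product of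
simple transpositions. -/
def len (n : ℕ) (w : Equiv.Perm (Fin n)) : ℕ :=
  sInf {k | ∃ l : List ℕ, l.length = k ∧ (∀ i ∈ l, i + 1 < n) ∧ w = (l.map (sTr n)).prod}

/-- The (strict) Bruhat order on the symmetric group: `y < z` iff `z` can be obtained
from `y` by successively multiplying by reflections, increasing the length at each step. -/
def bruhatLT (n : ℕ) (y z : Equiv.Perm (Fin n)) : Prop :=
  Relation.TransGen
    (fun a b => (∃ u v : Fin n, u ≠ v ∧ b = a * Equiv.swap u v) ∧ len n a < len n b) y z

/-- `y ≺ z` iff `y < z` in the Bruhat order and `ℓ(y) ≢ ℓ(z) (mod 2)`. -/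
def precLT (n : ℕ) (y z : Equiv.Perm (Fin n)) : Prop :=
  bruhatLT n y z ∧ ¬ (len n y % 2 = len n z % 2)

/-- The element `A_z = ½(T_z + ε_z T_z^#)`. -/
def Aelt {R H : Type*} [CommRing R] [Ring H] [Algebra R H] (n : ℕ)
    (T : Equiv.Perm (Fin n) → H) (hash : H ≃ₐ[R] H) (z : Equiv.Perm (Fin n)) : H :=
  Ring.inverse (2 : R) • (T z + ((-1 : R) ^ len n z) • hash (T z))

/-- The `ε`-eigenspace `H^ε = {h ∈ H : h^# = ε h}` of an algebra automorphism,
viewed as an `R`-submodule. -/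
def fixedSubmodule {R H : Type*} [CommRing R] [Ring H] [Algebra R H]
    (φ : H ≃ₐ[R] H) (ε : R) : Submodule R H where
  carrier := {x | φ x = ε • x}
  add_mem' := by
    intro a b ha hb
    simp only [Set.mem_setOf_eq] at *
    rw [map_add, ha, hb, smul_add]
  zero_mem' := by simp
  smul_mem' := by
    intro c a ha
    simp only [Set.mem_setOf_eq] at *
    rw [map_smul, ha, smul_smul, smul_smul, mul_comm]

/-- The quantum integer `[k] = q + q³ + ⋯ + q^{2k−1}` for `k ≥ 0`, and
`[k] = −q⁻¹ − q⁻³ − ⋯ − q^{2k+1}` for `k < 0`. -/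
def qint {F : Type*} [Field F] (q : F) : ℤ → F
  | Int.ofNat k => ∑ j ∈ Finset.range k, q ^ (2 * j + 1)
  | Int.negSucc k => -∑ j ∈ Finset.range (k + 1), (q ^ (2 * j + 1))⁻¹

/-- The coefficients `α_k = √(−1)·√([k+1])·√([k−1])/[k]` for `k > 0`, with
`α_{−k} = −α_k` (and `α_0 = 0`). -/
def alph {F : Type*} [Field F] (q sqm1 : F) (sq : ℕ → F) (m : ℤ) : F :=
  if 0 ≤ m then sqm1 * sq (m.toNat + 1) * sq (m.toNat - 1) / qint q m
  else -(sqm1 * sq ((-m).toNat + 1) * sq ((-m).toNat - 1) / qint q (-m))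

/-- A standard `μ`-tableau, recorded by the positions of its entries: `pos k` is the
cell containing the entry `k+1`.  Standardness means the entries are distinct cells
of `μ` and `t(r,c) < t(s,d)` whenever `(r,c) ≠ (s,d)`, `r ≤ s` and `c ≤ d`. -/
def IsStdTab (μ : YoungDiagram) {n : ℕ} (pos : Fin n → ℕ × ℕ) : Prop :=
  Function.Injective pos ∧ (∀ k, pos k ∈ μ) ∧
    ∀ j k : Fin n, (pos j).1 ≤ (pos k).1 → (pos j).2 ≤ (pos k).2 → pos j ≠ pos k → j < k

/-- The type of standard `μ`-tableaux with `n` entries. -/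
def StdTab (μ : YoungDiagram) (n : ℕ) : Type :=
  {pos : Fin n → ℕ × ℕ // IsStdTab μ pos}

/-- The content `c_t(m+1) = c − r` of the entry `m+1`, located in cell `(r, c)`
(and junk value `0` when `m ≥ n`). -/
def contN {n : ℕ} (pos : Fin n → ℕ × ℕ) (m : ℕ) : ℤ :=
  if h : m < n then ((pos ⟨m, h⟩).2 : ℤ) - ((pos ⟨m, h⟩).1 : ℤ) else 0

/-- The axial distance `ρ_t(i+1) = c_t(i+1) − c_t(i+2)` (0-indexed `i`). -/
def rhoAx {n : ℕ} (pos : Fin n → ℕ × ℕ) (i : ℕ) (hi : i + 1 < n) : ℤ :=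
  (((pos ⟨i, Nat.lt_of_succ_lt hi⟩).2 : ℤ) - ((pos ⟨i, Nat.lt_of_succ_lt hi⟩).1 : ℤ))
    - (((pos ⟨i + 1, hi⟩).2 : ℤ) - ((pos ⟨i + 1, hi⟩).1 : ℤ))

/-- The tableau `t·s_{i+1}`, obtained from `t` by swapping the entries `i+1`, `i+2`. -/
def swapEnt {n : ℕ} (pos : Fin n → ℕ × ℕ) (i : ℕ) (hi : i + 1 < n) : Fin n → ℕ × ℕ :=
  pos ∘ (Equiv.swap ⟨i, Nat.lt_of_succ_lt hi⟩ ⟨i + 1, hi⟩)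

/-- The conjugate of a tableau: the entry in cell `(r,c)` moves to cell `(c,r)`. -/
def conjPos {n : ℕ} (pos : Fin n → ℕ × ℕ) : Fin n → ℕ × ℕ :=
  fun k => ((pos k).2, (pos k).1)

lemma isStdTab_conj {μ : YoungDiagram} {n : ℕ} {pos : Fin n → ℕ × ℕ}
    (h : IsStdTab μ pos) : IsStdTab μ.transpose (conjPos pos) := by
  obtain ⟨hinj, hmem, hord⟩ := h
  refine ⟨?_, ?_, ?_⟩
  · intro a b hab
    apply hinj
    have h1 : ((pos a).2, (pos a).1) = ((pos b).2, (pos b).1) := hab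
    have h2 := congrArg Prod.snd h1
    have h3 := congrArg Prod.fst h1
    simp only at h2 h3
    exact Prod.ext h2 h3
  · intro k
    rw [YoungDiagram.mem_transpose]
    exact hmem k
  · intro j k h1 h2 hne
    refine hord j k h2 h1 ?_
    intro hc
    exact hne (by rw [conjPos, conjPos, hc])

/-- The conjugate standard tableau `t' ∈ Std(μ')` of `t ∈ Std(μ)`. -/
def conjTab {μ : YoungDiagram} {n : ℕ} (t : StdTab μ n) : StdTab μ.transpose n :=
  ⟨conjPos t.val, isStdTab_conj t.prop⟩

/-- The conjugate standard tableau, going from `Std(μ')` back to `Std(μ)`. -/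
def backConjTab {μ : YoungDiagram} {n : ℕ} (s : StdTab μ.transpose n) : StdTab μ n :=
  ⟨conjPos s.val, by
    have h := isStdTab_conj s.prop
    rwa [YoungDiagram.transpose_transpose] at h⟩

/-- The linear map `τ : S(μ') → S(μ)` with `v_s ↦ v_{s'}`. -/
def crossTau (F : Type*) [Field F] (μ : YoungDiagram) (n : ℕ) :
    (StdTab μ.transpose n → F) →ₗ[F] (StdTab μ n → F) where
  toFun f := fun t => f (conjTab t)
  map_add' _ _ := rfl
  map_smul' _ _ := rfl

/-- The linear map `τ : S(μ) → S(μ')` with `v_t ↦ v_{t'}`. -/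
def fwdTau (F : Type*) [Field F] (μ : YoungDiagram) (n : ℕ) :
    (StdTab μ n → F) →ₗ[F] (StdTab μ.transpose n → F) where
  toFun f := fun s => f (backConjTab s)
  map_add' _ _ := rfl
  map_smul' _ _ := rfl

/-- For a self-conjugate shape, the conjugate tableau `t'` of `t`, as a standard
tableau of the same shape. -/
def selfConjTab {μ : YoungDiagram} (hself : μ.transpose = μ) {n : ℕ}
    (t : StdTab μ n) : StdTab μ n :=
  ⟨conjPos t.val, by have h := isStdTab_conj t.prop; rwa [hself] at h⟩

/-- For a self-conjugate shape, the linear involution `τ` of `S(μ)` with `v_t ↦ v_{t'}`. -/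
def selfTau {F : Type*} [Field F] {μ : YoungDiagram} (hself : μ.transpose = μ) (n : ℕ) :
    (StdTab μ n → F) →ₗ[F] (StdTab μ n → F) where
  toFun f := fun t => f (selfConjTab hself t)
  map_add' _ _ := rfl
  map_smul' _ _ := rfl

/-- `act` is the (right) seminormal representation of the Hecke algebra on the Specht
module `S(μ)`, with basis `{v_t}` indexed by the standard `μ`-tableaux, on which the
generators act by `v_t T_i = (−1/[ρ_t(i)]) v_t + α_t(i) v_{t·s_i}`. -/
def SpechtRep {F : Type*} [Field F] (q sqm1 : F) (sq : ℕ → F) (n : ℕ)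
    {H : Type*} [Ring H] [Algebra F H] (T : Equiv.Perm (Fin n) → H)
    (μ : YoungDiagram) (act : H →ₗ[F] Module.End F (StdTab μ n → F)) : Prop :=
  act 1 = 1 ∧ (∀ a b : H, act (a * b) = act b * act a) ∧
    ∀ (i : ℕ) (hi : i + 1 < n) (t : StdTab μ n),
      act (T (sTr n i)) (Pi.single t (1 : F) : StdTab μ n → F) =
        (-(qint q (rhoAx t.val i hi))⁻¹) • (Pi.single t (1 : F) : StdTab μ n → F) +
          (if h : IsStdTab μ (swapEnt t.val i hi) then
            alph q sqm1 sq (rhoAx t.val i hi) •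
              (Pi.single (⟨swapEnt t.val i hi, h⟩ : StdTab μ n) (1 : F) : StdTab μ n → F)
           else 0)


section CoxeterLength

variable {n : ℕ}

lemma sTr_eq {i : ℕ} (hi : i + 1 < n) :
    sTr n i = Equiv.swap ⟨i, Nat.lt_of_succ_lt hi⟩ ⟨i + 1, hi⟩ :=
  dif_pos hi

lemma sTr_mul_self (i : ℕ) : sTr n i * sTr n i = 1 := by
  unfold sTr
  split
  · exact Equiv.swap_mul_self _ _
  · exact one_mul 1

lemma sTr_inv (i : ℕ) : (sTr n i)⁻¹ = sTr n i :=
  inv_eq_of_mul_eq_one_right (sTr_mul_self i)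

lemma sTr_ne_one {i : ℕ} (hi : i + 1 < n) : sTr n i ≠ 1 := by
  simp [sTr_eq hi, Equiv.swap_eq_one_iff, Fin.ext_iff]

lemma exists_word (w : Equiv.Perm (Fin n)) :
    ∃ l : List ℕ, (∀ i ∈ l, i + 1 < n) ∧ (l.map (sTr n)).prod = w := by
  cases n with
  | zero => exact ⟨[], by simp, Subsingleton.elim _ _⟩
  | succ m =>
    have hw : w ∈ Submonoid.closure
        (Set.range fun i : Fin m ↦ Equiv.swap i.castSucc i.succ) := by
      rw [Equiv.Perm.mclosure_swap_castSucc_succ]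
      trivial
    induction hw using Submonoid.closure_induction with
    | mem _ hx =>
      obtain ⟨i, rfl⟩ := hx
      exact ⟨[i], by simp, by simp [sTr_eq (Nat.succ_lt_succ i.isLt)]; rfl⟩
    | one => exact ⟨[], by simp, rfl⟩
    | mul _ _ _ _ hx hy =>
      obtain ⟨l₁, hl₁, rfl⟩ := hx
      obtain ⟨l₂, hl₂, rfl⟩ := hy
      refine ⟨l₁ ++ l₂, fun i hi => ?_, by simp⟩
      exact (List.mem_append.1 hi).elim (hl₁ i) (hl₂ i)

lemma len_le_length {l : List ℕ} (hl : ∀ i ∈ l, i + 1 < n) :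
    len n (l.map (sTr n)).prod ≤ l.length :=
  Nat.sInf_le ⟨l, rfl, hl, rfl⟩

lemma exists_reduced_word (w : Equiv.Perm (Fin n)) :
    ∃ l : List ℕ, (∀ i ∈ l, i + 1 < n) ∧ (l.map (sTr n)).prod = w ∧ l.length = len n w := by
  obtain ⟨l, hl, hlw⟩ := exists_word w
  obtain ⟨l', hlen, hl', hw⟩ := Nat.sInf_mem (s := {k | ∃ l : List ℕ, l.length = k ∧
    (∀ i ∈ l, i + 1 < n) ∧ w = (l.map (sTr n)).prod}) ⟨l.length, l, rfl, hl, hlw.symm⟩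
  exact ⟨l', hl', hw.symm, hlen⟩

lemma len_one : len n 1 = 0 :=
  Nat.le_zero.1 (len_le_length (l := []) (by simp))

lemma len_sTr {i : ℕ} (hi : i + 1 < n) : len n (sTr n i) = 1 := by
  have hle : len n (sTr n i) ≤ 1 := by simpa using len_le_length (l := [i]) (by simpa)
  have hne : len n (sTr n i) ≠ 0 := fun h0 => by
    obtain ⟨l, -, hl, hlen⟩ := exists_reduced_word (sTr n i)
    rw [h0, List.length_eq_zero_iff] at hlen
    subst hlen
    exact sTr_ne_one hi hl.symm
  omega

lemma len_mul_sTr_le (w : Equiv.Perm (Fin n)) {i : ℕ} (hi : i + 1 < n) :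
    len n (w * sTr n i) ≤ len n w + 1 := by
  obtain ⟨l, hl, rfl, hlen⟩ := exists_reduced_word w
  have := len_le_length (l := l ++ [i]) fun j hj =>
    (List.mem_append.1 hj).elim (hl j) fun h => List.mem_singleton.1 h ▸ hi
  simpa [hlen] using this

end CoxeterLength

section Hecke

variable {F H : Type*} [Field F] [Ring H] [Algebra F H] {n : ℕ} {q : F}
  {T : Equiv.Perm (Fin n) → H}

lemma T_sTr_mul_self (hT1 : T 1 = 1)
    (hmul2 : ∀ (w : Equiv.Perm (Fin n)) (i : ℕ), i + 1 < n →
      len n (w * sTr n i) + 1 = len n w →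
      T w * T (sTr n i) = T (w * sTr n i) + (q - q⁻¹) • T w)
    {i : ℕ} (hi : i + 1 < n) :
    T (sTr n i) * T (sTr n i) = 1 + (q - q⁻¹) • T (sTr n i) := by
  have := hmul2 (sTr n i) i hi (by rw [sTr_mul_self, len_one, len_sTr hi])
  rwa [sTr_mul_self, hT1] at this

lemma hash_T_sTr (hT1 : T 1 = 1)
    (hmul2 : ∀ (w : Equiv.Perm (Fin n)) (i : ℕ), i + 1 < n →
      len n (w * sTr n i) + 1 = len n w →
      T w * T (sTr n i) = T (w * sTr n i) + (q - q⁻¹) • T w)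
    (hash : H ≃ₐ[F] H)
    (hhash : ∀ w, hash (T w) = ((-1 : F) ^ len n w) • Ring.inverse (T w⁻¹))
    {i : ℕ} (hi : i + 1 < n) :
    hash (T (sTr n i)) = (q - q⁻¹) • 1 - T (sTr n i) := by
  have hsq := T_sTr_mul_self hT1 hmul2 hi
  have hinv : Ring.inverse (T (sTr n i)) = T (sTr n i) - (q - q⁻¹) • 1 :=
    Ring.inverse_unit ⟨T (sTr n i), T (sTr n i) - (q - q⁻¹) • 1,
      by rw [mul_sub, hsq, mul_smul_comm, mul_one, add_sub_cancel_right],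
      by rw [sub_mul, hsq, smul_mul_assoc, one_mul, add_sub_cancel_right]⟩
  rw [hhash, sTr_inv, len_sTr hi, hinv, pow_one, neg_one_smul, neg_sub]

lemma T_mem_adjoin_T_sTr (hT1 : T 1 = 1)
    (hmul1 : ∀ (w : Equiv.Perm (Fin n)) (i : ℕ), i + 1 < n →
      len n (w * sTr n i) = len n w + 1 → T w * T (sTr n i) = T (w * sTr n i))
    (w : Equiv.Perm (Fin n)) :
    T w ∈ Algebra.adjoin F {x | ∃ i, i + 1 < n ∧ T (sTr n i) = x} := by
  obtain ⟨l, hl, rfl, hlen⟩ := exists_reduced_word w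
  induction l using List.reverseRecOn with
  | nil => simp [hT1]
  | append_singleton l a ih =>
    have ha : a + 1 < n := hl a (by simp)
    have hl' : ∀ i ∈ l, i + 1 < n := fun i hi => hl i (by simp [hi])
    have hprod : ((l ++ [a]).map (sTr n)).prod = (l.map (sTr n)).prod * sTr n a := by simp
    rw [hprod, List.length_append, List.length_singleton] at hlen
    rw [hprod]
    have hprefix := len_le_length hl'
    have hstep := len_mul_sTr_le (l.map (sTr n)).prod ha
    -- a prefix of a reduced word is reduced
    have hlen' : l.length = len n (l.map (sTr n)).prod := by omega
    rw [← hmul1 _ a ha (by omega)]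
    exact Subalgebra.mul_mem _ (ih hl' hlen') (Algebra.subset_adjoin ⟨a, ha, rfl⟩)

lemma adjoin_T_sTr_eq_top (bT : Module.Basis (Equiv.Perm (Fin n)) F H) (hbT : ∀ w, bT w = T w)
    (hT1 : T 1 = 1)
    (hmul1 : ∀ (w : Equiv.Perm (Fin n)) (i : ℕ), i + 1 < n →
      len n (w * sTr n i) = len n w + 1 → T w * T (sTr n i) = T (w * sTr n i)) :
    Algebra.adjoin F {x | ∃ i, i + 1 < n ∧ T (sTr n i) = x} = ⊤ := by
  refine eq_top_iff.2 fun a _ => ?_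
  have hspan : Submodule.span F (Set.range bT) ≤
      Subalgebra.toSubmodule (Algebra.adjoin F {x | ∃ i, i + 1 < n ∧ T (sTr n i) = x}) :=
    Submodule.span_le.2 <| Set.range_subset_iff.2 fun w => by
      rw [hbT]
      exact T_mem_adjoin_T_sTr hT1 hmul1 w
  exact hspan (bT.span_eq ▸ Submodule.mem_top)

end Hecke

lemma comp_eq_of_mem_adjoin {F H V W : Type*} [Field F] [Ring H] [Algebra F H]
    [AddCommGroup V] [Module F V] [AddCommGroup W] [Module F W]
    {ρ : H →ₗ[F] Module.End F V} {ρ' : H →ₗ[F] Module.End F W}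
    (hρ1 : ρ 1 = 1) (hρmul : ∀ a b, ρ (a * b) = ρ b * ρ a)
    (hρ'1 : ρ' 1 = 1) (hρ'mul : ∀ a b, ρ' (a * b) = ρ' b * ρ' a)
    (σ : H →ₐ[F] H) (f : V →ₗ[F] W) {s : Set H}
    (hs : ∀ x ∈ s, f ∘ₗ ρ x = ρ' (σ x) ∘ₗ f) {a : H} (ha : a ∈ Algebra.adjoin F s) :
    f ∘ₗ ρ a = ρ' (σ a) ∘ₗ f := by
  induction ha using Algebra.adjoin_induction with
  | mem x hx => exact hs x hx
  | algebraMap c =>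
    rw [AlgHom.commutes, Algebra.algebraMap_eq_smul_one, map_smul, map_smul, hρ1, hρ'1,
      LinearMap.comp_smul, LinearMap.smul_comp]
    rfl
  | add x y _ _ hx hy =>
    rw [map_add, map_add, map_add, LinearMap.comp_add, LinearMap.add_comp, hx, hy]
  | mul x y _ _ hx hy =>
    rw [hρmul, map_mul, hρ'mul, Module.End.mul_eq_comp, Module.End.mul_eq_comp,
      ← LinearMap.comp_assoc, hy, LinearMap.comp_assoc, hx, LinearMap.comp_assoc]

section QInt

variable {F : Type*} [Field F] {q : F}

lemma qint_neg_natCast (hq0 : q ≠ 0) (m : ℕ) :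
    qint q (-m) = -(q ^ (2 * m))⁻¹ * qint q m := by
  cases m with
  | zero => simp [qint]
  | succ k =>
    have hneg : -((k + 1 : ℕ) : ℤ) = Int.negSucc k := rfl
    rw [hneg, qint.eq_def, qint.eq_def, neg_mul, Finset.mul_sum, neg_inj,
      ← Finset.sum_range_reflect _ (k + 1)]
    refine Finset.sum_congr rfl fun j hj => ?_
    have hj : j < k + 1 := Finset.mem_range.1 hj
    have hpow : q ^ (2 * (k + 1 - 1 - j) + 1) * q ^ (2 * j + 1) = q ^ (2 * (k + 1)) := by
      rw [← pow_add]
      congr 1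
      omega
    field_simp
    rw [← hpow]

lemma sub_inv_mul_qint_natCast (hq0 : q ≠ 0) (m : ℕ) :
    (q - q⁻¹) * qint q m = q ^ (2 * m) - 1 := by
  have hstep : ∀ j ∈ Finset.range m,
      (q - q⁻¹) * q ^ (2 * j + 1) = q ^ (2 * (j + 1)) - q ^ (2 * j) := fun j _ => by
    field_simp
    ring
  show (q - q⁻¹) * ∑ j ∈ Finset.range m, q ^ (2 * j + 1) = _
  rw [Finset.mul_sum, Finset.sum_congr rfl hstep,
    Finset.sum_range_sub (fun j => q ^ (2 * j))]
  simp

lemma inv_qint_add_inv_qint_neg (hq0 : q ≠ 0) {k : ℤ} (hk : qint q k ≠ 0) :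
    (qint q k)⁻¹ + (qint q (-k))⁻¹ = -(q - q⁻¹) := by
  have hnat : ∀ m : ℕ, qint q m ≠ 0 → (qint q m)⁻¹ + (qint q (-m))⁻¹ = -(q - q⁻¹) :=
    fun m hm => calc
      (qint q m)⁻¹ + (qint q (-m))⁻¹ = (1 - q ^ (2 * m)) * (qint q m)⁻¹ := by
        rw [qint_neg_natCast hq0, neg_mul, inv_neg, mul_inv, inv_inv]
        ring
      _ = -(q - q⁻¹) * (qint q m * (qint q m)⁻¹) := by
        linear_combination (qint q m)⁻¹ * sub_inv_mul_qint_natCast hq0 m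
      _ = -(q - q⁻¹) := by rw [mul_inv_cancel₀ hm, mul_one]
  obtain ⟨m, rfl | rfl⟩ := Int.eq_nat_or_neg k
  · exact hnat m hk
  · rw [qint_neg_natCast hq0] at hk
    rw [neg_neg, add_comm]
    exact hnat m (right_ne_zero_of_mul hk)

lemma alph_neg {sqm1 : F} {sq : ℕ → F} (hsq0 : sq 0 = 0) (m : ℤ) :
    alph q sqm1 sq (-m) = -alph q sqm1 sq m := by
  rcases lt_trichotomy m 0 with hm | rfl | hm
  · simp only [alph, if_pos (by omega : (0 : ℤ) ≤ -m), if_neg (by omega : ¬(0 : ℤ) ≤ m), neg_neg]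
  · simp [alph, hsq0]
  · simp only [alph, if_neg (by omega : ¬(0 : ℤ) ≤ -m), if_pos hm.le, neg_neg]

end QInt

lemma YoungDiagram.snd_add_fst_lt_card {μ : YoungDiagram} {c c' : ℕ × ℕ} (hc : c ∈ μ)
    (hc' : c' ∈ μ) : c.2 + c'.1 < μ.card := by
  obtain ⟨r, col⟩ := c
  obtain ⟨r', col'⟩ := c'
  -- `μ` contains the `col + r' + 1` cells `(0, 0), …, (0, col), (1, 0), …, (r', 0)`
  have := Finset.card_le_card_of_injOn (s := Finset.range (col + r' + 1)) (t := μ.cells)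
    (fun j => if j ≤ col then (0, j) else (j - col, 0)) (fun j hj => ?_) (fun j hj j' hj' h => ?_)
  · simpa using this
  · simp only [Finset.coe_range, Set.mem_Iio, Finset.mem_coe, YoungDiagram.mem_cells] at hj ⊢
    split_ifs with hjc
    · exact μ.up_left_mem (Nat.zero_le _) hjc hc
    · exact μ.up_left_mem (by omega) (Nat.zero_le _) hc'
  · simp only [Finset.coe_range, Set.mem_Iio] at hj hj'
    simp only at h
    split_ifs at h <;> simp only [Prod.mk.injEq] at h <;> omega

section Tableau

variable {μ : YoungDiagram} {n : ℕ} {pos : Fin n → ℕ × ℕ}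

lemma natAbs_rhoAx_lt (hmem : ∀ k, pos k ∈ μ) {i : ℕ} (hi : i + 1 < n) :
    (rhoAx pos i hi).natAbs < μ.card := by
  have h₁ := YoungDiagram.snd_add_fst_lt_card (hmem ⟨i, Nat.lt_of_succ_lt hi⟩) (hmem ⟨i + 1, hi⟩)
  have h₂ := YoungDiagram.snd_add_fst_lt_card (hmem ⟨i + 1, hi⟩) (hmem ⟨i, Nat.lt_of_succ_lt hi⟩)
  unfold rhoAx
  omega

lemma IsStdTab.exists_pos_eq (h : IsStdTab μ pos) (hμ : μ.card = n) {c : ℕ × ℕ} (hc : c ∈ μ) :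
    ∃ k, pos k = c := by
  have hsub : Finset.univ.image pos ⊆ μ.cells := fun c hc => by
    obtain ⟨k, -, rfl⟩ := Finset.mem_image.1 hc
    exact (μ.mem_cells _).2 (h.2.1 k)
  have himage := Finset.eq_of_subset_of_card_le hsub (by
    rw [Finset.card_image_of_injective _ h.1, Finset.card_univ, Fintype.card_fin, ← hμ])
  obtain ⟨k, -, hk⟩ := Finset.mem_image.1 (himage ▸ (μ.mem_cells c).2 hc)
  exact ⟨k, hk⟩

lemma IsStdTab.rhoAx_ne_zero (h : IsStdTab μ pos) (hμ : μ.card = n) {i : ℕ} (hi : i + 1 < n) :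
    rhoAx pos i hi ≠ 0 := by
  obtain ⟨⟨r, c⟩, hp⟩ : ∃ p, pos ⟨i, Nat.lt_of_succ_lt hi⟩ = p := ⟨_, rfl⟩
  obtain ⟨⟨r', c'⟩, hp'⟩ : ∃ p, pos ⟨i + 1, hi⟩ = p := ⟨_, rfl⟩
  intro h0
  simp only [rhoAx, hp, hp'] at h0
  rcases lt_trichotomy r r' with hr | rfl | hr
  · obtain ⟨k, hk⟩ := h.exists_pos_eq hμ (μ.up_left_mem hr.le le_rfl (hp' ▸ h.2.1 _))
    have h₁ := h.2.2 _ k (by rw [hp, hk]) (by rw [hp, hk]; omega)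
      (by rw [hp, hk]; simp only [ne_eq, Prod.mk.injEq, true_and]; omega)
    have h₂ := h.2.2 k _ (by rw [hp', hk]; omega) (by rw [hp', hk])
      (by rw [hp', hk]; simp only [ne_eq, Prod.mk.injEq, not_and]; omega)
    rw [Fin.lt_def] at h₁ h₂
    simp only at h₁ h₂
    omega
  · have := h.1 (hp.trans (hp'.trans (by rw [show c = c' by omega])).symm)
    simp [Fin.ext_iff] at this
  · have := h.2.2 ⟨i + 1, hi⟩ ⟨i, Nat.lt_of_succ_lt hi⟩ (by rw [hp, hp']; omega)
      (by rw [hp, hp']; simp only; omega)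
      (by rw [hp, hp']; simp only [ne_eq, Prod.mk.injEq, not_and]; omega)
    rw [Fin.lt_def] at this
    simp only at this
    omega

lemma IsStdTab.qint_rhoAx_ne_zero {F : Type*} [Field F] {q : F} (hq0 : q ≠ 0)
    (hqint : ∀ k : ℕ, 1 ≤ k → k ≤ n → qint q (k : ℤ) ≠ 0)
    (h : IsStdTab μ pos) (hμ : μ.card = n) {i : ℕ} (hi : i + 1 < n) :
    qint q (rhoAx pos i hi) ≠ 0 := by
  have hne := h.rhoAx_ne_zero hμ hi
  have hlt := natAbs_rhoAx_lt h.2.1 hi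
  have hqm := hqint (rhoAx pos i hi).natAbs (by omega) (by omega)
  rcases Int.natAbs_eq (rhoAx pos i hi) with heq | heq <;> rw [heq]
  · exact hqm
  · rw [qint_neg_natCast hq0]
    exact mul_ne_zero (neg_ne_zero.2 (inv_ne_zero (pow_ne_zero _ hq0))) hqm

end Tableau

section Conjugation

variable {μ : YoungDiagram} {n : ℕ}

lemma rhoAx_conjPos (pos : Fin n → ℕ × ℕ) (i : ℕ) (hi : i + 1 < n) :
    rhoAx (conjPos pos) i hi = -rhoAx pos i hi := by
  unfold rhoAx conjPos
  ring

lemma isStdTab_swapEnt_conjPos_iff (pos : Fin n → ℕ × ℕ) (i : ℕ) (hi : i + 1 < n) :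
    IsStdTab μ.transpose (swapEnt (conjPos pos) i hi) ↔ IsStdTab μ (swapEnt pos i hi) :=
  ⟨fun h => μ.transpose_transpose ▸ isStdTab_conj h, isStdTab_conj⟩

lemma fwdTau_bijective (F : Type*) [Field F] : Function.Bijective (fwdTau F μ n) :=
  Function.bijective_iff_has_inverse.2 ⟨crossTau F μ n, fun _ => rfl, fun _ => rfl⟩

lemma fwdTau_single (F : Type*) [Field F] (t : StdTab μ n) :
    fwdTau F μ n (Pi.single t (1 : F)) = Pi.single (conjTab t) 1 := by
  funext s
  show (Pi.single t (1 : F) : StdTab μ n → F) (backConjTab s) = _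
  simp only [Pi.single_apply]
  congr 1
  exact propext ⟨fun h => h ▸ rfl, fun h => h ▸ rfl⟩

instance : Finite (StdTab μ n) :=
  Finite.of_injective (fun t k => (⟨t.val k, (μ.mem_cells _).2 (t.prop.2.1 k)⟩ : μ.cells))
    fun _ _ h => Subtype.ext (funext fun k => congrArg Subtype.val (congrFun h k))

end Conjugation

section Specht

variable {F H : Type*} [Field F] [Ring H] [Algebra F H] {q sqm1 : F} {sq : ℕ → F}
  {n : ℕ} {T : Equiv.Perm (Fin n) → H} {μ : YoungDiagram}
  {act : H →ₗ[F] Module.End F (StdTab μ n → F)}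
  {act' : H →ₗ[F] Module.End F (StdTab μ.transpose n → F)}

lemma fwdTau_act_T_sTr_single (hq0 : q ≠ 0) (hsq0 : sq 0 = 0)
    (hact : SpechtRep q sqm1 sq n T μ act) (hact' : SpechtRep q sqm1 sq n T μ.transpose act')
    {i : ℕ} (hi : i + 1 < n) (t : StdTab μ n) (hρ : qint q (rhoAx t.val i hi) ≠ 0) :
    fwdTau F μ n (act (T (sTr n i)) (Pi.single t 1)) =
      act' ((q - q⁻¹) • 1 - T (sTr n i)) (fwdTau F μ n (Pi.single t 1)) := by
  have hq : q - q⁻¹ = -((qint q (rhoAx t.val i hi))⁻¹ + (qint q (-rhoAx t.val i hi))⁻¹) := by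
    rw [inv_qint_add_inv_qint_neg hq0 hρ, neg_neg]
  have e := hact'.2.2 i hi (conjTab t)
  rw [show rhoAx (conjTab t).val i hi = -rhoAx t.val i hi from rhoAx_conjPos t.val i hi] at e
  rw [hact.2.2 i hi t, fwdTau_single, map_sub, map_smul, hact'.1, LinearMap.sub_apply,
    LinearMap.smul_apply, Module.End.one_apply, e, map_add, map_smul, fwdTau_single]
  by_cases hsw : IsStdTab μ (swapEnt t.val i hi)
  · have hsw' : IsStdTab μ.transpose (swapEnt (conjTab t).val i hi) :=
      (isStdTab_swapEnt_conjPos_iff t.val i hi).2 hsw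
    have hswap : (⟨swapEnt (conjTab t).val i hi, hsw'⟩ : StdTab μ.transpose n) =
        conjTab ⟨swapEnt t.val i hi, hsw⟩ := rfl
    rw [dif_pos hsw, dif_pos hsw', hswap, map_smul]
    erw [fwdTau_single]
    rw [alph_neg hsq0, hq]
    module
  · have hsw' : ¬ IsStdTab μ.transpose (swapEnt (conjTab t).val i hi) :=
      fun h => hsw ((isStdTab_swapEnt_conjPos_iff t.val i hi).1 h)
    rw [dif_neg hsw, dif_neg hsw', map_zero, hq]
    module

lemma fwdTau_comp_act_T_sTr (hq0 : q ≠ 0) (hsq0 : sq 0 = 0)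
    (hqint : ∀ k : ℕ, 1 ≤ k → k ≤ n → qint q (k : ℤ) ≠ 0) (hμ : μ.card = n)
    (hact : SpechtRep q sqm1 sq n T μ act) (hact' : SpechtRep q sqm1 sq n T μ.transpose act')
    {i : ℕ} (hi : i + 1 < n) :
    fwdTau F μ n ∘ₗ act (T (sTr n i)) = act' ((q - q⁻¹) • 1 - T (sTr n i)) ∘ₗ fwdTau F μ n := by
  refine LinearMap.pi_ext fun t x => ?_
  rw [show (Pi.single t x : StdTab μ n → F) = x • Pi.single t 1 by
    rw [← Pi.single_smul, smul_eq_mul, mul_one]]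
  simp only [LinearMap.comp_apply, map_smul]
  rw [fwdTau_act_T_sTr_single hq0 hsq0 hact hact' hi t
    (t.prop.qint_rhoAx_ne_zero hq0 hqint hμ hi)]

end Specht

theorem tau_isomorphism_of_alternating_modules_general
    {F : Type*} [Field F] (q : F) (hq0 : q ≠ 0) (n : ℕ)
    (hqint : ∀ k : ℕ, 1 ≤ k → k ≤ n → qint q (k : ℤ) ≠ 0)
    -- the chosen square roots √(−1) and √([k]) in F
    (sqm1 : F)
    (sq : ℕ → F) (hsq0 : sq 0 = 0)
    {H : Type*} [Ring H] [Algebra F H]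
    -- the Iwahori–Hecke algebra of type A with its basis of standard elements T_w
    (T : Equiv.Perm (Fin n) → H)
    (bT : Module.Basis (Equiv.Perm (Fin n)) F H) (hbT : ∀ w, bT w = T w)
    (hT1 : T 1 = 1)
    (hmul1 : ∀ (w : Equiv.Perm (Fin n)) (i : ℕ), i + 1 < n →
      len n (w * sTr n i) = len n w + 1 → T w * T (sTr n i) = T (w * sTr n i))
    (hmul2 : ∀ (w : Equiv.Perm (Fin n)) (i : ℕ), i + 1 < n →
      len n (w * sTr n i) + 1 = len n w →
      T w * T (sTr n i) = T (w * sTr n i) + (q - q⁻¹) • T w)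
    -- the hash involution
    (hash : H ≃ₐ[F] H)
    (hhash : ∀ w, hash (T w) = ((-1 : F) ^ len n w) • Ring.inverse (T w⁻¹))
    -- the seminormal Specht modules S(λ) and S(λ')
    (μ : YoungDiagram) (hμ : μ.card = n)
    (act : H →ₗ[F] Module.End F (StdTab μ n → F))
    (hact : SpechtRep q sqm1 sq n T μ act)
    (act' : H →ₗ[F] Module.End F (StdTab μ.transpose n → F))
    (hact' : SpechtRep q sqm1 sq n T μ.transpose act') :
    Function.Bijective (fwdTau F μ n) ∧
      ∀ a : H, hash a = a → ∀ f : StdTab μ n → F,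
        fwdTau F μ n (act a f) = act' a (fwdTau F μ n f) := by
  have hgen : ∀ x ∈ {x | ∃ i, i + 1 < n ∧ T (sTr n i) = x},
      fwdTau F μ n ∘ₗ act x = act' (hash x) ∘ₗ fwdTau F μ n := by
    rintro _ ⟨i, hi, rfl⟩
    rw [hash_T_sTr hT1 hmul2 hash hhash hi]
    exact fwdTau_comp_act_T_sTr hq0 hsq0 hqint hμ hact hact' hi
  refine ⟨fwdTau_bijective F, fun a ha f => ?_⟩
  have hcomm : fwdTau F μ n ∘ₗ act a = act' (hash a) ∘ₗ fwdTau F μ n :=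
    comp_eq_of_mem_adjoin hact.1 hact.2.1 hact'.1 hact'.2.1 (hash : H →ₐ[F] H) _ hgen
      (adjoin_T_sTr_eq_top bT hbT hT1 hmul1 ▸ Algebra.mem_top)
  rw [ha] at hcomm
  exact LinearMap.congr_fun hcomm f

/-- Corollary `ConjugateIso`: the map `τ : S(λ) → S(λ')`, `v_t ↦ v_{t'}`,
is an isomorphism of `𝒜ₙ(q)`-modules, where both Specht modules are restricted to the
alternating Hecke algebra `𝒜ₙ(q) = {a ∈ H : a^# = a}`. -/
theorem tau_isomorphism_of_alternating_modules
    {F : Type*} [Field F] (q : F) (hq0 : q ≠ 0) (hq1 : q ≠ 1) (n : ℕ)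
    (hqint : ∀ k : ℕ, 1 ≤ k → k ≤ n → qint q (k : ℤ) ≠ 0)
    -- the chosen square roots √(−1) and √([k]) in F
    (sqm1 : F) (hsqm1 : sqm1 ^ 2 = -1)
    (sq : ℕ → F) (hsq0 : sq 0 = 0)
    (hsq : ∀ k : ℕ, 1 ≤ k → k ≤ n → sq k ^ 2 = qint q (k : ℤ))
    {H : Type*} [Ring H] [Algebra F H]
    -- the Iwahori–Hecke algebra of type A with its basis of standard elements T_w
    (T : Equiv.Perm (Fin n) → H)
    (bT : Module.Basis (Equiv.Perm (Fin n)) F H) (hbT : ∀ w, bT w = T w)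
    (hT1 : T 1 = 1)
    (hTunit : ∀ w, IsUnit (T w))
    (hmul1 : ∀ (w : Equiv.Perm (Fin n)) (i : ℕ), i + 1 < n →
      len n (w * sTr n i) = len n w + 1 → T w * T (sTr n i) = T (w * sTr n i))
    (hmul2 : ∀ (w : Equiv.Perm (Fin n)) (i : ℕ), i + 1 < n →
      len n (w * sTr n i) + 1 = len n w →
      T w * T (sTr n i) = T (w * sTr n i) + (q - q⁻¹) • T w)
    -- the hash involution
    (hash : H ≃ₐ[F] H)
    (hhash : ∀ w, hash (T w) = ((-1 : F) ^ len n w) • Ring.inverse (T w⁻¹))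
    -- the seminormal Specht modules S(λ) and S(λ')
    (μ : YoungDiagram) (hμ : μ.card = n)
    (act : H →ₗ[F] Module.End F (StdTab μ n → F))
    (hact : SpechtRep q sqm1 sq n T μ act)
    (act' : H →ₗ[F] Module.End F (StdTab μ.transpose n → F))
    (hact' : SpechtRep q sqm1 sq n T μ.transpose act') :
    Function.Bijective (fwdTau F μ n) ∧
      ∀ a : H, hash a = a → ∀ f : StdTab μ n → F,
        fwdTau F μ n (act a f) = act' a (fwdTau F μ n f) :=
  tau_isomorphism_of_alternating_modules_general q hq0 n hqint sqm1 sq hsq0 T bT hbT hT1 hmul1 hmul2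
    hash hhash μ hμ act hact act' hact'

end
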